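/- arXiv:1404.1770 — 4 statements merged into one kernel-verified Lean document; each statement's English description precedes it below -/
import Mathlib

section
/- Let f(x₁, x₂) = (α(x₁)β(x₂) + λx₁, μx₂) as in the DA construction with 0 < λ < 1 < μ and λ² < α'(x₁)β(x₂) + λ for all (x₁,x₂). Then f is a diffeomorphism of ℝ² (its Jacobian determinant is everywhere positive and bounded below by λ²μ > 0), and f is injective. -/
open Filter

/-- The upper-triangular linear map `(u,v) ↦ (a u + b v, m v)` as a continuous
linear equivalence of `ℝ²`, when `a ≠ 0` and `m ≠ 0`. -/
noncomputable def daEquiv (a b m : ℝ) (ha : a ≠ 0) (hm : m ≠ 0) :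
    (ℝ × ℝ) ≃L[ℝ] (ℝ × ℝ) :=
  LinearEquiv.toContinuousLinearEquiv
    { toFun := fun v => (a * v.1 + b * v.2, m * v.2)
      map_add' := fun x y => by ext <;> dsimp <;> ring
      map_smul' := fun c x => by ext <;> dsimp <;> ring
      invFun := fun w => (a⁻¹ * (w.1 - b * (m⁻¹ * w.2)), m⁻¹ * w.2)
      left_inv := fun v => by ext <;> dsimp <;> field_simp <;> ring
      right_inv := fun w => by ext <;> dsimp <;> field_simp <;> ring }

lemma daEquiv_apply (a b m : ℝ) (ha : a ≠ 0) (hm : m ≠ 0) (v : ℝ × ℝ) :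
    (daEquiv a b m ha hm : (ℝ × ℝ) →L[ℝ] (ℝ × ℝ)) v
      = (a * v.1 + b * v.2, m * v.2) := rfl

/-- The DA map `f(x₁,x₂) = (α(x₁)β(x₂) + λx₁, μx₂)` with
`λ² < α'(x₁)β(x₂) + λ` everywhere is a diffeomorphism of `ℝ²`: it is injective,
bijective, differentiable with differentiable inverse, and its Jacobian
determinant `(α'(x₁)β(x₂) + λ)·μ` is bounded below by `λ²μ > 0`. -/
theorem stmt_8 (lam mu : ℝ) (h0 : 0 < lam) (h1 : lam < 1) (h2 : 1 < mu)
    (α β : ℝ → ℝ) (hα : ContDiff ℝ (⊤ : ℕ∞) α) (hβ : ContDiff ℝ (⊤ : ℕ∞) β)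
    (f : ℝ × ℝ → ℝ × ℝ)
    (hf : ∀ p : ℝ × ℝ, f p = (α p.1 * β p.2 + lam * p.1, mu * p.2))
    (hdom : ∀ p : ℝ × ℝ, lam ^ 2 < deriv α p.1 * β p.2 + lam) :
    (0 < lam ^ 2 * mu ∧
      ∀ p : ℝ × ℝ, lam ^ 2 * mu < (deriv α p.1 * β p.2 + lam) * mu) ∧
    Function.Injective f ∧ Function.Bijective f ∧
    Differentiable ℝ f ∧
    ∃ g : ℝ × ℝ → ℝ × ℝ, Function.LeftInverse g f ∧ Function.RightInverse g f ∧
      Differentiable ℝ g := by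
  have hμ : (0:ℝ) < mu := lt_trans one_pos h2
  have hl2 : (0:ℝ) < lam ^ 2 := by positivity
  have hαd : Differentiable ℝ α := hα.differentiable (by simp)
  have hβd : Differentiable ℝ β := hβ.differentiable (by simp)
  -- derivative of the first-coordinate map with second coordinate frozen
  have hphi : ∀ b x : ℝ, HasDerivAt (fun x => α x * β b + lam * x)
      (deriv α x * β b + lam) x := by
    intro b x
    have hA := (hαd x).hasDerivAt.mul_const (β b)
    have hB : HasDerivAt (fun x : ℝ => lam * x) lam x := by
      simpa using (hasDerivAt_id x).const_mul lam
    exact hA.add hB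
  have hmono : ∀ b : ℝ, StrictMono (fun x => α x * β b + lam * x) := by
    intro b
    apply strictMono_of_deriv_pos
    intro x
    rw [(hphi b x).deriv]
    have := hdom (x, b)
    simp only at this
    linarith
  have hsurj1 : ∀ b : ℝ, Function.Surjective (fun x => α x * β b + lam * x) := by
    intro b
    have hcont : Continuous fun x => α x * β b + lam * x := by
      exact ((hαd.continuous.mul continuous_const).add
        (continuous_const.mul continuous_id))
    have hψ : Monotone (fun x => (α x * β b + lam * x) - lam ^ 2 * x) := by
      apply (strictMono_of_deriv_pos ?_).monotone
      intro x
      have hd : HasDerivAt (fun x => (α x * β b + lam * x) - lam ^ 2 * x)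
          (deriv α x * β b + lam - lam ^ 2) x := by
        have h2' : HasDerivAt (fun x : ℝ => lam ^ 2 * x) (lam ^ 2) x := by
          simpa using (hasDerivAt_id x).const_mul (lam ^ 2)
        exact (hphi b x).sub h2'
      rw [hd.deriv]
      have := hdom (x, b)
      simp only at this
      linarith
    have htop : Tendsto (fun x => α x * β b + lam * x) atTop atTop := by
      apply tendsto_atTop_mono'
        (f₁ := fun x => (α 0 * β b + lam * 0 - lam ^ 2 * 0) + lam ^ 2 * x) atTop
      · filter_upwards [eventually_ge_atTop (0:ℝ)] with x hx
        have := hψ hx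
        simp only at this ⊢
        linarith
      · exact tendsto_atTop_add_const_left _ _
          (Tendsto.const_mul_atTop hl2 tendsto_id)
    have hbot : Tendsto (fun x => α x * β b + lam * x) atBot atBot := by
      apply tendsto_atBot_mono'
        (f₁ := fun x => (α 0 * β b + lam * 0 - lam ^ 2 * 0) + lam ^ 2 * x) atBot
      · filter_upwards [eventually_le_atBot (0:ℝ)] with x hx
        have := hψ hx
        simp only at this ⊢
        linarith
      · exact tendsto_atBot_add_const_left _ _
          (Tendsto.const_mul_atBot hl2 tendsto_id)
    exact hcont.surjective htop hbot
  -- injectivity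
  have hinj : Function.Injective f := by
    intro p q hpq
    rw [hf p, hf q] at hpq
    have h2' : p.2 = q.2 :=
      mul_left_cancel₀ (ne_of_gt hμ) (congrArg Prod.snd hpq)
    have h1' : α p.1 * β p.2 + lam * p.1 = α q.1 * β q.2 + lam * q.1 :=
      congrArg Prod.fst hpq
    rw [← h2'] at h1'
    exact Prod.ext ((hmono p.2).injective h1') h2'
  -- surjectivity
  have hsurjf : Function.Surjective f := by
    intro y
    obtain ⟨x1, hx1⟩ := hsurj1 (y.2 / mu) y.1
    refine ⟨(x1, y.2 / mu), ?_⟩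
    rw [hf]
    ext
    · exact hx1
    · exact mul_div_cancel₀ y.2 (ne_of_gt hμ)
  -- smoothness of f
  have hfeq : f = fun p : ℝ × ℝ => (α p.1 * β p.2 + lam * p.1, mu * p.2) :=
    funext hf
  have hfC : ContDiff ℝ (⊤ : ℕ∞) f := by
    rw [hfeq]
    exact ContDiff.prodMk
      (((hα.comp contDiff_fst).mul (hβ.comp contDiff_snd)).add
        (contDiff_const.mul contDiff_fst))
      (contDiff_const.mul contDiff_snd)
  have hfd : Differentiable ℝ f := hfC.differentiable (by simp)
  -- strict derivative at each point, as a continuous linear equiv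
  have hstrict : ∀ p : ℝ × ℝ, ∃ E : (ℝ × ℝ) ≃L[ℝ] (ℝ × ℝ),
      HasStrictFDerivAt f (E : (ℝ × ℝ) →L[ℝ] (ℝ × ℝ)) p := by
    intro p
    set a : ℝ := deriv α p.1 * β p.2 + lam with ha_def
    have hapos : 0 < a := lt_trans hl2 (hdom p)
    set b : ℝ := α p.1 * deriv β p.2 with hb_def
    refine ⟨daEquiv a b mu (ne_of_gt hapos) (ne_of_gt hμ), ?_⟩
    have hA : HasFDerivAt (fun q : ℝ × ℝ => α q.1)
        (deriv α p.1 • ContinuousLinearMap.fst ℝ ℝ ℝ) p :=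
      (hαd p.1).hasDerivAt.comp_hasFDerivAt p (hasFDerivAt_fst)
    have hB : HasFDerivAt (fun q : ℝ × ℝ => β q.2)
        (deriv β p.2 • ContinuousLinearMap.snd ℝ ℝ ℝ) p :=
      (hβd p.2).hasDerivAt.comp_hasFDerivAt p (hasFDerivAt_snd)
    have hmul := hA.mul hB
    have hlam : HasFDerivAt (fun q : ℝ × ℝ => lam * q.1)
        (lam • ContinuousLinearMap.fst ℝ ℝ ℝ) p :=
      (hasFDerivAt_fst).const_mul lam
    have hsnd : HasFDerivAt (fun q : ℝ × ℝ => mu * q.2)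
        (mu • ContinuousLinearMap.snd ℝ ℝ ℝ) p :=
      (hasFDerivAt_snd).const_mul mu
    have hfderiv : HasFDerivAt f
        (((α p.1 • (deriv β p.2 • ContinuousLinearMap.snd ℝ ℝ ℝ) +
            β p.2 • (deriv α p.1 • ContinuousLinearMap.fst ℝ ℝ ℝ)) +
          lam • ContinuousLinearMap.fst ℝ ℝ ℝ).prod
          (mu • ContinuousLinearMap.snd ℝ ℝ ℝ)) p := by
      rw [hfeq]
      exact (hmul.add hlam).prodMk hsnd
    have hEeq : (((α p.1 • (deriv β p.2 • ContinuousLinearMap.snd ℝ ℝ ℝ) +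
            β p.2 • (deriv α p.1 • ContinuousLinearMap.fst ℝ ℝ ℝ)) +
          lam • ContinuousLinearMap.fst ℝ ℝ ℝ).prod
          (mu • ContinuousLinearMap.snd ℝ ℝ ℝ))
        = (daEquiv a b mu (ne_of_gt hapos) (ne_of_gt hμ) :
            (ℝ × ℝ) →L[ℝ] (ℝ × ℝ)) := by
      apply ContinuousLinearMap.ext
      intro v
      rw [daEquiv_apply]
      ext <;> simp [ha_def, hb_def] <;> ring
    rw [hEeq] at hfderiv
    have hst := (hfC.contDiffAt (x := p)).hasStrictFDerivAt (by simp)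
    rwa [hfderiv.fderiv] at hst
  -- the global inverse and its differentiability
  refine ⟨⟨by positivity, fun p => mul_lt_mul_of_pos_right (hdom p) hμ⟩,
    hinj, ⟨hinj, hsurjf⟩, hfd, Function.invFun f,
    Function.leftInverse_invFun hinj, Function.rightInverse_invFun hsurjf, ?_⟩
  intro y
  obtain ⟨p, rfl⟩ := hsurjf y
  obtain ⟨E, hE⟩ := hstrict p
  have hli : DifferentiableAt ℝ (hE.localInverse f E p) (f p) :=
    hE.to_localInverse.differentiableAt
  have heq : Function.invFun f =ᶠ[nhds (f p)] hE.localInverse f E p := by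
    filter_upwards [hE.eventually_right_inverse] with y' hy'
    apply hinj
    rw [Function.rightInverse_invFun hsurjf y', hy']
  exact (heq.differentiableAt_iff).mpr hli
end

section
/- Let M ∈ GL₂(ℝ) be upper triangular, M = [[a, b],[0, d]], with 0 < a < d. Then the horizontal axis E = span(e₁) satisfies M(E) = E, and for every line F' ⊂ ℝ² with F' ≠ E, the iterates Mⁿ(F') converge to the line F = span((b/(d-a), 1)), which satisfies M(F) = F. Moreover the splitting ℝ² = E ⊕ F is dominated: ‖M|_E‖ = a < d = ‖M|_F‖. -/
open Filter

private lemma mv2 (p q r : ℝ) (v : Fin 2 → ℝ) :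
    (!![p,q;0,r]).mulVec v = ![p * v 0 + q * v 1, r * v 1] := by
  funext i; fin_cases i <;> simp [Matrix.mulVec, dotProduct, Fin.sum_univ_two]

/-- Linear model of a dominated splitting for an upper triangular matrix
`M = [[a,b],[0,d]]` with `0 < a < d`: the horizontal axis `E` is invariant,
`F = span (b/(d-a), 1)` is invariant, `E ⊕ F = ℝ²`, the iterates of any line
`F' ≠ E` converge (in slope) to `F`, and `M` scales `E` by `a` and `F` by `d`
with `a < d` (domination). -/
theorem stmt_9 (a b d : ℝ) (ha : 0 < a) (had : a < d)
    (M : Matrix (Fin 2) (Fin 2) ℝ) (hM : M = !![a, b; 0, d]) :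
    let E : Submodule ℝ (Fin 2 → ℝ) := Submodule.span ℝ {![1, 0]}
    let F : Submodule ℝ (Fin 2 → ℝ) := Submodule.span ℝ {![b / (d - a), 1]}
    Submodule.map (Matrix.toLin' M) E = E ∧
    Submodule.map (Matrix.toLin' M) F = F ∧
    IsCompl E F ∧
    (∀ v : Fin 2 → ℝ, v ≠ 0 → v ∉ E →
      Tendsto (fun n : ℕ => ((M ^ n).mulVec v 0) / ((M ^ n).mulVec v 1))
        atTop (nhds (b / (d - a)))) ∧
    (∀ u ∈ E, ‖M.mulVec u‖ = a * ‖u‖) ∧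
    (∀ v ∈ F, ‖M.mulVec v‖ = d * ‖v‖) := by
  intro E F
  have hd : (0:ℝ) < d := ha.trans had
  have hda : d - a ≠ 0 := sub_ne_zero.2 had.ne'
  set c : ℝ := b / (d - a) with hc
  have hcb : c * (d - a) = b := div_mul_cancel₀ b hda
  -- action on the generating vectors
  have hE1 : M.mulVec ![1, 0] = a • ![1, 0] := by
    rw [hM, mv2]; funext i; fin_cases i <;> simp
  have hF1 : M.mulVec ![c, 1] = d • ![c, 1] := by
    rw [hM, mv2]; funext i; fin_cases i <;> simp <;> nlinarith [hcb]
  -- membership characterizations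
  have hmemE : ∀ u : Fin 2 → ℝ, u ∈ E ↔ u 1 = 0 := by
    intro u
    constructor
    · intro hu
      rcases Submodule.mem_span_singleton.1 hu with ⟨t, ht⟩
      rw [← ht]; simp
    · intro hu
      refine Submodule.mem_span_singleton.2 ⟨u 0, ?_⟩
      funext i; fin_cases i <;> simp [hu]
  have hmemF : ∀ u : Fin 2 → ℝ, u ∈ F ↔ u 0 = c * u 1 := by
    intro u
    constructor
    · intro hu
      rcases Submodule.mem_span_singleton.1 hu with ⟨t, ht⟩
      rw [← ht]; simp [mul_comm, hc]
    · intro hu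
      refine Submodule.mem_span_singleton.2 ⟨u 1, ?_⟩
      funext i; fin_cases i <;> simp [hu, mul_comm, hc]
  -- linearity facts
  have hMu : ∀ u : Fin 2 → ℝ, u ∈ E → M.mulVec u = a • u := by
    intro u hu
    rcases Submodule.mem_span_singleton.1 hu with ⟨t, ht⟩
    rw [← ht, Matrix.mulVec_smul, hE1, smul_comm]
  have hMv : ∀ u : Fin 2 → ℝ, u ∈ F → M.mulVec u = d • u := by
    intro u hu
    rcases Submodule.mem_span_singleton.1 hu with ⟨t, ht⟩
    rw [← ht, Matrix.mulVec_smul, hF1, smul_comm]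
  refine ⟨?_, ?_, ?_, ?_, ?_, ?_⟩
  · rw [Submodule.map_span, Set.image_singleton, Matrix.toLin'_apply, hE1,
      Submodule.span_singleton_smul_eq (isUnit_iff_ne_zero.2 ha.ne')]
  · rw [Submodule.map_span, Set.image_singleton, Matrix.toLin'_apply, hF1,
      Submodule.span_singleton_smul_eq (isUnit_iff_ne_zero.2 hd.ne')]
  · constructor
    · rw [disjoint_iff_inf_le]
      intro x hx
      have h1 := (hmemE x).1 hx.1
      have h2 := (hmemF x).1 hx.2
      have : x = 0 := by funext i; fin_cases i <;> simp_all
      simp [this]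
    · rw [codisjoint_iff_le_sup]
      intro v _
      refine Submodule.mem_sup.2 ⟨(v 0 - c * v 1) • ![1, 0], Submodule.smul_mem _ _
        (Submodule.mem_span_singleton_self _), (v 1) • ![c, 1], Submodule.smul_mem _ _
        (Submodule.mem_span_singleton_self _), ?_⟩
      funext i; fin_cases i <;> simp <;> ring
  · intro v hv hvE
    have hv1 : v 1 ≠ 0 := fun h => hvE ((hmemE v).2 h)
    have hpow : ∀ n : ℕ, M ^ n = !![a ^ n, b * (d ^ n - a ^ n) / (d - a); 0, d ^ n] := by
      intro n
      induction n with
      | zero => simp [Matrix.one_fin_two]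
      | succ n ih =>
        rw [pow_succ, ih, hM, Matrix.mul_fin_two]
        ext i j
        fin_cases i <;> fin_cases j <;>
          simp [pow_succ] <;> (field_simp; ring)
    have hkey : ∀ n : ℕ,
        ((M ^ n).mulVec v 0) / ((M ^ n).mulVec v 1)
          = (a / d) ^ n * (v 0 / v 1) + c * (1 - (a / d) ^ n) := by
      intro n
      rw [hpow n, mv2]
      have hdn : d ^ n ≠ 0 := pow_ne_zero n hd.ne'
      simp only [Matrix.cons_val_zero, Matrix.cons_val_one, Matrix.head_cons, hc,
        div_pow]
      field_simp
    simp only [hkey]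
    have hlim : Tendsto (fun n : ℕ => (a / d) ^ n) atTop (nhds 0) := by
      apply tendsto_pow_atTop_nhds_zero_of_lt_one
      · positivity
      · rw [div_lt_one hd]; exact had
    have hgoal : Tendsto (fun n : ℕ => (a / d) ^ n * (v 0 / v 1) + c * (1 - (a / d) ^ n))
        atTop (nhds (0 * (v 0 / v 1) + c * (1 - 0))) :=
      (hlim.mul (tendsto_const_nhds (x := v 0 / v 1))).add
        ((tendsto_const_nhds (x := c)).mul ((tendsto_const_nhds (x := (1:ℝ))).sub hlim))
    simpa using hgoal
  · intro u hu
    rw [hMu u hu, norm_smul, Real.norm_eq_abs, abs_of_pos ha]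
  · intro u hu
    rw [hMv u hu, norm_smul, Real.norm_eq_abs, abs_of_pos hd]
end

section
/- (Cone criterion, linear version of Lemma 2.2) Let K > 0, η > 1, and δ > 0 with δ < π/4. There exists ε > 0 such that: for any 2×2 matrix M = [[a,b],[c,d]] with min(|a|,|d|) > K, |d| > η|a|, and max(|b|,|c|) < ε, the cone C_δ = {(u,v) ∈ ℝ² : |u| ≤ tan(δ)|v|} is strictly invariant under M in the sense that there is δ' < δ depending only on K, η, δ, ε such that if (u', v') = M(u, v) with |u| ≤ tan(δ)|v|, then |u'| ≤ tan(δ')|v'|, and for every nonzero w ∈ C_δ, |Mw| ≥ (K/2)|w|. -/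
set_option maxHeartbeats 1000000 in
/-- Cone criterion (linear version of Lemma 2.2): given `K > 0`, `η > 1`,
`0 < δ < π/4`, there are `ε > 0` and `δ' < δ` such that any matrix
`M = [[a,b],[c,d]]` with `min(|a|,|d|) > K`, `|d| > η|a|`, `max(|b|,|c|) < ε`
maps the vertical cone `{|u| ≤ tan δ |v|}` strictly into the cone of angle `δ'`,
and expands every vector of the cone by a factor at least `K/2`. -/

theorem stmt_10 (K η δ : ℝ) (hK : 0 < K) (hη : 1 < η) (hδ0 : 0 < δ)
    (hδ : δ < Real.pi / 4) :
    ∃ ε > (0:ℝ), ∃ δ' : ℝ, 0 < δ' ∧ δ' < δ ∧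
      ∀ a b c d : ℝ, min |a| |d| > K → |d| > η * |a| → max |b| |c| < ε →
        (∀ u v : ℝ, |u| ≤ Real.tan δ * |v| → (u, v) ≠ (0, 0) →
          |a * u + b * v| ≤ Real.tan δ' * |c * u + d * v| ∧
          c * u + d * v ≠ 0) ∧
        (∀ u v : ℝ, |u| ≤ Real.tan δ * |v| →
          K / 2 * Real.sqrt (u ^ 2 + v ^ 2) ≤
            Real.sqrt ((a * u + b * v) ^ 2 + (c * u + d * v) ^ 2)) := by
  have hpi : (0:ℝ) < Real.pi := Real.pi_pos
  have hδlt : δ < Real.pi / 2 := by linarith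
  set t := Real.tan δ with ht
  have htpos : 0 < t := Real.tan_pos_of_pos_of_lt_pi_div_two hδ0 hδlt
  have ht1 : t < 1 := by
    have := Real.tan_lt_tan_of_nonneg_of_lt_pi_div_two hδ0.le
      (by linarith : Real.pi/4 < Real.pi/2) hδ
    rwa [Real.tan_pi_div_four] at this
  have hη0 : (0:ℝ) < η := by linarith
  set t' : ℝ := t * (η + 1) / (2 * η) with ht'
  have ht'pos : 0 < t' := by positivity
  have ht'lt : t' < t := by
    rw [ht', div_lt_iff₀ (by positivity)]
    nlinarith
  have ht'1 : t' < 1 := ht'lt.trans ht1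
  set ε : ℝ := min (K * t * (η - 1) / (4 * η)) (K / 4) with hε
  have hεpos : 0 < ε := by
    have h1 : 0 < η - 1 := by linarith
    exact lt_min (by positivity) (by positivity)
  have hεK4 : ε ≤ K / 4 := min_le_right _ _
  have hε1 : ε ≤ K * t * (η - 1) / (4 * η) := min_le_left _ _
  have hε4η : ε * (4 * η) ≤ K * t * (η - 1) := by
    rw [le_div_iff₀ (by positivity)] at hε1; exact hε1
  clear_value t t' ε
  refine ⟨ε, hεpos, Real.arctan t', ?_, ?_, ?_⟩
  · have := Real.arctan_strictMono ht'pos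
    rwa [Real.arctan_zero] at this
  · calc Real.arctan t' < Real.arctan t := Real.arctan_strictMono ht'lt
      _ = δ := by rw [ht, Real.arctan_tan (by linarith) hδlt]
  intro a b c d hmin had hbc
  have hA : K < |a| := lt_of_lt_of_le hmin (min_le_left _ _)
  have hD : K < |d| := lt_of_lt_of_le hmin (min_le_right _ _)
  have hB : |b| < ε := lt_of_le_of_lt (le_max_left _ _) hbc
  have hC : |c| < ε := lt_of_le_of_lt (le_max_right _ _) hbc
  -- the key lower bound, valid for all u v in the cone
  have hlow : ∀ u v : ℝ, |u| ≤ t * |v| → (|d| - ε) * |v| ≤ |c * u + d * v| := by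
    intro u v hU
    have h1 : |d * v| - |c * u| ≤ |c * u + d * v| := by
      have h := abs_sub_abs_le_abs_sub (d*v) (-(c*u))
      rw [abs_neg, sub_neg_eq_add, add_comm] at h
      exact h
    have h2 : |c * u| ≤ ε * |v| := by
      rw [abs_mul]
      calc |c| * |u| ≤ ε * (t * |v|) :=
            mul_le_mul hC.le hU (abs_nonneg _) hεpos.le
        _ ≤ ε * |v| := by nlinarith [mul_nonneg hεpos.le (abs_nonneg v)]
    rw [abs_mul] at h1
    nlinarith
  constructor
  · intro u v hu hne
    have hv : v ≠ 0 := by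
      rintro rfl
      simp only [abs_zero, mul_zero] at hu
      exact hne (by simp [abs_nonpos_iff.1 hu])
    have hvpos : 0 < |v| := abs_pos.2 hv
    have hlow' := hlow u v hu
    have hlowpos : 0 < |c * u + d * v| :=
      lt_of_lt_of_le (mul_pos (by linarith) hvpos) hlow'
    refine ⟨?_, fun h => by rw [h, abs_zero] at hlowpos; exact hlowpos.false⟩
    rw [Real.tan_arctan]
    have hup : |a * u + b * v| ≤ (|a| * t + ε) * |v| := by
      calc |a * u + b * v| ≤ |a| * |u| + |b| * |v| := by
            rw [← abs_mul, ← abs_mul]; exact abs_add_le _ _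
        _ ≤ (|a| * t + ε) * |v| := by nlinarith [abs_nonneg a]
    have P : (|a| * t + ε) * (2 * η) ≤ t * (η + 1) * (|d| - ε) := by
      have s1 : |a| * t * η ≤ |d| * t := by nlinarith [mul_le_mul_of_nonneg_right had.le htpos.le]
      have s3 : K * t * (η - 1) ≤ |d| * t * (η - 1) := by
        apply mul_le_mul_of_nonneg_right (mul_le_mul_of_nonneg_right hD.le htpos.le)
        linarith
      have s4 : t * (η + 1) * ε ≤ 2 * η * ε := by
        have h0 : (0:ℝ) ≤ 2 * η - t * (η + 1) := by
          nlinarith [mul_nonneg (by linarith : (0:ℝ) ≤ 1 - t) (by linarith : (0:ℝ) ≤ η + 1)]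
        nlinarith [mul_nonneg hεpos.le h0]
      nlinarith [s1, s3, s4, hε4η]
    have key : (|a| * t + ε) * |v| ≤ t' * ((|d| - ε) * |v|) := by
      rw [ht', div_mul_eq_mul_div, le_div_iff₀ (by positivity)]
      have := mul_le_mul_of_nonneg_right P hvpos.le
      nlinarith [this]
    calc |a * u + b * v| ≤ (|a| * t + ε) * |v| := hup
      _ ≤ t' * ((|d| - ε) * |v|) := key
      _ ≤ t' * |c * u + d * v| := mul_le_mul_of_nonneg_left hlow' ht'pos.le
  · intro u v hu
    rcases eq_or_ne v 0 with rfl | hv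
    · have hu0 : u = 0 := abs_nonpos_iff.1 (by simpa using hu)
      subst hu0
      simpa using Real.sqrt_nonneg ((a*0+b*0)^2+(c*0+d*0)^2)
    · have hvpos : 0 < |v| := abs_pos.2 hv
      have hlow' := hlow u v hu
      have hsq : Real.sqrt (u ^ 2 + v ^ 2) ≤ Real.sqrt 2 * |v| := by
        rw [show Real.sqrt 2 * |v| = Real.sqrt (2 * v^2) by
          rw [Real.sqrt_mul (by norm_num), Real.sqrt_sq_eq_abs]]
        apply Real.sqrt_le_sqrt
        have h1 : |u| * |u| ≤ (t * |v|) * (t * |v|) :=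
          mul_self_le_mul_self (abs_nonneg u) hu
        have h2 : t * t * (|v| * |v|) ≤ 1 * (|v| * |v|) :=
          mul_le_mul_of_nonneg_right (by nlinarith) (mul_nonneg (abs_nonneg v) (abs_nonneg v))
        nlinarith [sq_abs u, sq_abs v]
      have hs2 : Real.sqrt 2 ≤ 3/2 := by
        nlinarith [Real.sq_sqrt (show (0:ℝ) ≤ 2 by norm_num), Real.sqrt_nonneg 2]
      have hrhs : |c * u + d * v| ≤ Real.sqrt ((a * u + b * v) ^ 2 + (c * u + d * v) ^ 2) := by
        rw [← Real.sqrt_sq_eq_abs]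
        apply Real.sqrt_le_sqrt
        nlinarith [sq_nonneg (a*u+b*v)]
      have h34 : 3 / 4 * K * |v| ≤ (|d| - ε) * |v| := by nlinarith
      calc K / 2 * Real.sqrt (u ^ 2 + v ^ 2) ≤ K / 2 * (Real.sqrt 2 * |v|) := by
            apply mul_le_mul_of_nonneg_left hsq (by positivity)
        _ ≤ 3 / 4 * K * |v| := by
            nlinarith [mul_nonneg (mul_nonneg (by linarith : (0:ℝ) ≤ 3/2 - Real.sqrt 2) hK.le) (abs_nonneg v)]
        _ ≤ (|d| - ε) * |v| := h34
        _ ≤ |c * u + d * v| := hlow'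
        _ ≤ _ := hrhs
end

section
/- Let η > 1 and let (M_n)_{n∈ℤ} be a sequence of invertible 2×2 matrices of the form M_n = [[a_n, b_n],[0, d_n]] with 0 < a_n, |d_n| > η a_n, and sup_n max(a_n, |d_n|, |b_n|) < ∞, inf_n a_n > 0. Then there is a unique sequence of lines F_n ⊂ ℝ² with M_n(F_n) = F_{n+1}, F_n ≠ span(e₁), and such that vectors in F_n are expanded relative to vectors in E = span(e₁): for all unit u ∈ E, unit v ∈ F_n, and all k ≥ 1, |M_{n+k-1}⋯M_n u| ≤ C η^{-k} |M_{n+k-1}⋯M_n v| for some constant C independent of n, k. -/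
/-- The product `M_{n+k-1} ⋯ M_{n+1} M_n` of a two-sided sequence of matrices. -/
def prodM (M : ℤ → Matrix (Fin 2) (Fin 2) ℝ) (n : ℤ) : ℕ → Matrix (Fin 2) (Fin 2) ℝ
  | 0 => 1
  | k + 1 => M (n + k) * prodM M n k

noncomputable def xseq (r g : ℤ → ℝ) (n : ℤ) : ℝ :=
  ∑' j : ℕ, (∏ i ∈ Finset.range j, r (n - 1 - i)) * g (n - 1 - j)

lemma xterm_bound {r g : ℤ → ℝ} {ρ G : ℝ} (hρ0 : 0 ≤ ρ)
    (hr : ∀ m, |r m| ≤ ρ) (hg : ∀ m, |g m| ≤ G) (n : ℤ) (j : ℕ) :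
    |(∏ i ∈ Finset.range j, r (n - 1 - i)) * g (n - 1 - j)| ≤ ρ ^ j * G := by
  rw [abs_mul]
  apply mul_le_mul _ (hg _) (abs_nonneg _) (pow_nonneg hρ0 j)
  rw [Finset.abs_prod]
  calc ∏ i ∈ Finset.range j, |r (n-1-(i:ℤ))| ≤ ∏ _i ∈ Finset.range j, ρ :=
        Finset.prod_le_prod (fun i _ => abs_nonneg _) (fun i _ => hr _)
    _ = ρ ^ j := by simp

lemma xseq_summable {r g : ℤ → ℝ} {ρ G : ℝ} (hρ0 : 0 ≤ ρ) (hρ1 : ρ < 1)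
    (hr : ∀ m, |r m| ≤ ρ) (hg : ∀ m, |g m| ≤ G) (n : ℤ) :
    Summable (fun j : ℕ => (∏ i ∈ Finset.range j, r (n - 1 - i)) * g (n - 1 - j)) :=
  Summable.of_norm_bounded ((summable_geometric_of_lt_one hρ0 hρ1).mul_right G)
    (fun j => by rw [Real.norm_eq_abs]; exact xterm_bound hρ0 hr hg n j)

lemma xseq_bound {r g : ℤ → ℝ} {ρ G : ℝ} (hρ0 : 0 ≤ ρ) (hρ1 : ρ < 1)
    (hr : ∀ m, |r m| ≤ ρ) (hg : ∀ m, |g m| ≤ G) (n : ℤ) :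
    |xseq r g n| ≤ (1 - ρ)⁻¹ * G := by
  have hs := xseq_summable hρ0 hρ1 hr hg n
  calc |xseq r g n| ≤ ∑' j : ℕ, |(∏ i ∈ Finset.range j, r (n - 1 - i)) * g (n - 1 - j)| := by
        have h := norm_tsum_le_tsum_norm (f := fun j : ℕ =>
          (∏ i ∈ Finset.range j, r (n - 1 - i)) * g (n - 1 - j)) hs.abs
        simp only [Real.norm_eq_abs] at h
        exact h
    _ ≤ ∑' j : ℕ, ρ ^ j * G :=
        Summable.tsum_le_tsum (fun j => xterm_bound hρ0 hr hg n j) hs.abs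
          ((summable_geometric_of_lt_one hρ0 hρ1).mul_right G)
    _ = (1 - ρ)⁻¹ * G := by
        rw [tsum_mul_right, tsum_geometric_of_lt_one hρ0 hρ1]

lemma xseq_rec {r g : ℤ → ℝ} {ρ G : ℝ} (hρ0 : 0 ≤ ρ) (hρ1 : ρ < 1)
    (hr : ∀ m, |r m| ≤ ρ) (hg : ∀ m, |g m| ≤ G) (n : ℤ) :
    xseq r g (n + 1) = r n * xseq r g n + g n := by
  have hs := xseq_summable hρ0 hρ1 hr hg (n+1)
  have key : ∀ j : ℕ, (∏ i ∈ Finset.range (j+1), r (n + 1 - 1 - i)) * g (n + 1 - 1 - (j+1:ℕ))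
      = r n * ((∏ i ∈ Finset.range j, r (n - 1 - i)) * g (n - 1 - j)) := by
    intro j
    rw [Finset.prod_range_succ']
    have h1 : ∀ i : ℕ, n + 1 - 1 - ((i:ℕ)+1:ℕ) = n - 1 - i := by intro i; push_cast; ring
    have h2 : n + 1 - 1 - ((0:ℕ):ℤ) = n := by push_cast; ring
    have h3 : n + 1 - 1 - ((j:ℕ)+1:ℕ) = n - 1 - j := by push_cast; ring
    rw [h2, h3]
    rw [Finset.prod_congr rfl (fun i _ => by rw [h1 i])]
    ring
  rw [xseq, Summable.tsum_eq_zero_add hs]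
  simp only [key]
  rw [tsum_mul_left]
  have h0 : (∏ i ∈ Finset.range 0, r (n + 1 - 1 - (i:ℤ))) * g (n + 1 - 1 - ((0:ℕ):ℤ)) = g n := by
    simp
  simp only [xseq]
  rw [h0]
  exact add_comm (g n) _

lemma vec_ne_zero (y : ℝ) : (![y,1] : Fin 2 → ℝ) ≠ 0 := by
  intro h
  have := congrFun h 1
  simp at this

lemma one_le_norm_vec (y : ℝ) : 1 ≤ ‖(![y,1] : Fin 2 → ℝ)‖ := by
  have := norm_le_pi_norm (![y,1] : Fin 2 → ℝ) 1
  simpa using this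

lemma abs_le_norm_vec (y : ℝ) : |y| ≤ ‖(![y,1] : Fin 2 → ℝ)‖ := by
  have := norm_le_pi_norm (![y,1] : Fin 2 → ℝ) 0
  simpa using this

lemma norm_vec_le (y X : ℝ) (h : |y| ≤ X) : ‖(![y,1] : Fin 2 → ℝ)‖ ≤ max X 1 := by
  refine (pi_norm_le_iff_of_nonneg (le_trans zero_le_one (le_max_right X 1))).2 ?_
  intro i
  fin_cases i
  · simpa using le_trans h (le_max_left X 1)
  · simpa using le_max_right X 1

lemma norm_e1 : ‖(![1,0] : Fin 2 → ℝ)‖ = 1 := by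
  have h1 : ‖(![1,0] : Fin 2 → ℝ)‖ ≤ 1 := by
    refine (pi_norm_le_iff_of_nonneg zero_le_one).2 ?_
    intro i; fin_cases i <;> simp
  have h2 : (1:ℝ) ≤ ‖(![1,0] : Fin 2 → ℝ)‖ := by
    have := norm_le_pi_norm (![1,0] : Fin 2 → ℝ) 0
    simpa using this
  linarith

lemma span_vec_eq {x y : ℝ}
    (h : Submodule.span ℝ {(![y,1] : Fin 2 → ℝ)} = Submodule.span ℝ {![x,1]}) : y = x := by
  have hm : (![y,1] : Fin 2 → ℝ) ∈ Submodule.span ℝ {(![x,1] : Fin 2 → ℝ)} :=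
    h ▸ Submodule.mem_span_singleton_self _
  obtain ⟨c, hc⟩ := Submodule.mem_span_singleton.1 hm
  have h1 := congrFun hc 1
  have h0 := congrFun hc 0
  simp at h1 h0
  rw [h1] at h0; linarith

lemma line_exists_spanning (F : Submodule ℝ (Fin 2 → ℝ)) (h : Module.finrank ℝ F = 1) :
    ∃ v : Fin 2 → ℝ, v ≠ 0 ∧ F = Submodule.span ℝ {v} := by
  have hr : Module.rank ℝ F = 1 := by
    rw [← Module.finrank_eq_rank]; exact_mod_cast congrArg Nat.cast h
  obtain ⟨v, hvF, hv0, hle⟩ := (rank_submodule_eq_one_iff F).1 hr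
  exact ⟨v, hv0, le_antisymm hle ((Submodule.span_singleton_le_iff_mem v F).2 hvF)⟩

set_option maxHeartbeats 2000000 in
/-- Existence and uniqueness of the unstable bundle `F` of a dominated splitting
along an orbit, for bounded upper triangular cocycles `M_n = [[a_n,b_n],[0,d_n]]`
with `0 < a_n`, `|d_n| > η a_n`: there is a unique sequence of lines `F_n ≠ span e₁`
with `M_n F_n = F_{n+1}` along which vectors are expanded, relative to
`E = span e₁`, at rate `η` up to a uniform constant. -/
theorem stmt_12 (η : ℝ) (hη : 1 < η)
    (a b d : ℤ → ℝ) (M : ℤ → Matrix (Fin 2) (Fin 2) ℝ)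
    (hM : ∀ n, M n = !![a n, b n; 0, d n])
    (ha : ∀ n, 0 < a n) (hdom : ∀ n, |d n| > η * a n)
    (hbdd : ∃ B : ℝ, ∀ n, a n ≤ B ∧ |d n| ≤ B ∧ |b n| ≤ B)
    (hinf : ∃ c > (0:ℝ), ∀ n, c ≤ a n) :
    ∃! F : ℤ → Submodule ℝ (Fin 2 → ℝ),
      (∀ n, Module.finrank ℝ (F n) = 1) ∧
      (∀ n, F n ≠ Submodule.span ℝ {![1, 0]}) ∧
      (∀ n, Submodule.map (Matrix.toLin' (M n)) (F n) = F (n + 1)) ∧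
      ∃ C > (0:ℝ), ∀ (n : ℤ) (k : ℕ), 1 ≤ k →
        ∀ u v : Fin 2 → ℝ, u ∈ Submodule.span ℝ ({![1, 0]} : Set (Fin 2 → ℝ)) →
          ‖u‖ = 1 → v ∈ F n → ‖v‖ = 1 →
          ‖(prodM M n k).mulVec u‖ ≤ C * η ^ (-(k : ℤ)) * ‖(prodM M n k).mulVec v‖ := by
  obtain ⟨B, hB⟩ := hbdd
  obtain ⟨c, hc0, hc⟩ := hinf
  have hη0 : (0:ℝ) < η := lt_trans zero_lt_one hη
  have hd0 : ∀ n, 0 < |d n| := fun n => lt_trans (mul_pos hη0 (ha n)) (hdom n)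
  have hdne : ∀ n, d n ≠ 0 := fun n => abs_pos.1 (hd0 n)
  -- the contraction/size data
  set r : ℤ → ℝ := fun n => a n / d n with hrdef
  set g : ℤ → ℝ := fun n => b n / d n with hgdef
  set ρ : ℝ := η⁻¹ with hρdef
  have hρ0 : 0 ≤ ρ := by rw [hρdef]; positivity
  have hρ1 : ρ < 1 := inv_lt_one_of_one_lt₀ hη
  have hr : ∀ m, |r m| ≤ ρ := by
    intro m
    rw [hrdef]
    simp only [abs_div, abs_of_pos (ha m)]
    rw [div_le_iff₀ (hd0 m), hρdef]
    rw [inv_mul_eq_div, le_div_iff₀ hη0]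
    nlinarith [hdom m]
  set G : ℝ := B / (η * c) with hGdef
  have hg : ∀ m, |g m| ≤ G := by
    intro m
    rw [hgdef]
    simp only [abs_div]
    have h1 : η * c ≤ |d m| := le_trans (by nlinarith [hc m, ha m]) (le_of_lt (hdom m))
    have h2 : 0 < η * c := by positivity
    rw [hGdef, div_le_div_iff₀ (hd0 m) h2]
    nlinarith [(hB m).2.2, (hB m).2.1, abs_nonneg (b m), h1, hd0 m]
  set X : ℝ := (1 - ρ)⁻¹ * G with hXdef
  -- the invariant sequence, made opaque
  obtain ⟨x, hX, hxrec⟩ : ∃ x : ℤ → ℝ, (∀ n, |x n| ≤ X) ∧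
      ∀ m, d m * x (m+1) = a m * x m + b m := by
    refine ⟨xseq r g, fun n => xseq_bound hρ0 hρ1 hr hg n, fun m => ?_⟩
    have h := xseq_rec hρ0 hρ1 hr hg m
    rw [h]
    have hgen : ∀ t : ℝ, d m * (r m * t + g m) = a m * t + b m := by
      intro t
      rw [hrdef, hgdef]
      have hd := hdne m
      field_simp
    exact hgen _
  have hX0 : 0 ≤ X := le_trans (abs_nonneg _) (hX 0)
  -- matrix computations
  have hmulvec : ∀ n (p q : ℝ), (M n).mulVec ![p, q] = ![a n * p + b n * q, d n * q] := by
    intro n p q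
    rw [hM]
    funext i; fin_cases i <;> simp [Matrix.mulVec, dotProduct]
  have hstep : ∀ (z : ℤ → ℝ), (∀ m, d m * z (m+1) = a m * z m + b m) →
      ∀ m, (M m).mulVec ![z m, 1] = d m • ![z (m+1), 1] := by
    intro z hz m
    rw [hmulvec]
    funext i; fin_cases i
    · simp [← hz m]
    · simp
  have hprod_e1 : ∀ (n : ℤ) (k : ℕ), (prodM M n k).mulVec ![1,0]
      = (∏ j ∈ Finset.range k, a (n+j)) • ![1,0] := by
    intro n k
    induction k with
    | zero => simp [prodM, Matrix.one_mulVec]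
    | succ k ih =>
      rw [prodM, ← Matrix.mulVec_mulVec, ih, Matrix.mulVec_smul, Finset.prod_range_succ]
      have : (M (n+k)).mulVec ![1,0] = a (n+k) • ![1,0] := by
        rw [hmulvec]; funext i; fin_cases i <;> simp
      rw [this, smul_smul, mul_comm]
  have hprod_w : ∀ (z : ℤ → ℝ), (∀ m, d m * z (m+1) = a m * z m + b m) →
      ∀ (n : ℤ) (k : ℕ), (prodM M n k).mulVec ![z n, 1]
        = (∏ j ∈ Finset.range k, d (n+j)) • ![z (n+k), 1] := by
    intro z hz n k
    induction k with
    | zero => simp [prodM, Matrix.one_mulVec]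
    | succ k ih =>
      rw [prodM, ← Matrix.mulVec_mulVec, ih, Matrix.mulVec_smul, hstep z hz (n+k),
        Finset.prod_range_succ, smul_smul, mul_comm]
      have : (n : ℤ) + (k:ℕ) + 1 = n + ((k:ℕ)+1 : ℕ) := by push_cast; ring
      rw [this]
  -- products of a's and |d|'s
  have hPa_pos : ∀ (n : ℤ) (k : ℕ), 0 < ∏ j ∈ Finset.range k, a (n+j) :=
    fun n k => Finset.prod_pos (fun j _ => ha _)
  have hPd_pos : ∀ (n : ℤ) (k : ℕ), 0 < ∏ j ∈ Finset.range k, |d (n+j)| :=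
    fun n k => Finset.prod_pos (fun j _ => hd0 _)
  have hPaPd : ∀ (n : ℤ) (k : ℕ),
      ∏ j ∈ Finset.range k, a (n+j) ≤ η⁻¹ ^ k * ∏ j ∈ Finset.range k, |d (n+j)| := by
    intro n k
    calc ∏ j ∈ Finset.range k, a (n+j) ≤ ∏ j ∈ Finset.range k, η⁻¹ * |d (n+j)| := by
          refine Finset.prod_le_prod (fun j _ => le_of_lt (ha _)) (fun j _ => ?_)
          rw [inv_mul_eq_div, le_div_iff₀ hη0]
          nlinarith [hdom (n+j)]
      _ = η⁻¹ ^ k * ∏ j ∈ Finset.range k, |d (n+j)| := by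
          rw [Finset.prod_mul_distrib]; simp
  have hzpow : ∀ k : ℕ, η ^ (-(k:ℤ)) = η⁻¹ ^ k := by
    intro k
    rw [zpow_neg, zpow_natCast, inv_pow]
  -- the candidate bundle
  set F : ℤ → Submodule ℝ (Fin 2 → ℝ) := fun n => Submodule.span ℝ {![x n, 1]} with hFdef
  have hFne : ∀ n, F n ≠ Submodule.span ℝ {![1, 0]} := by
    intro n h
    have hm : (![x n,1] : Fin 2 → ℝ) ∈ Submodule.span ℝ {(![1,0] : Fin 2 → ℝ)} :=
      h ▸ Submodule.mem_span_singleton_self _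
    obtain ⟨t, ht⟩ := Submodule.mem_span_singleton.1 hm
    have := congrFun ht 1
    simp at this
  refine ⟨F, ⟨fun n => finrank_span_singleton (vec_ne_zero (x n)), hFne, ?_, ?_⟩, ?_⟩
  · -- invariance
    intro n
    rw [hFdef]
    simp only
    rw [Submodule.map_span, Set.image_singleton, Matrix.toLin'_apply, hstep x hxrec n]
    exact Submodule.span_singleton_smul_eq (IsUnit.mk0 (d n) (hdne n)) _
  · -- the expansion estimate
    refine ⟨max X 1, lt_of_lt_of_le zero_lt_one (le_max_right X 1), ?_⟩
    intro n k _ u v hu hu1 hv hv1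
    obtain ⟨t, ht⟩ := Submodule.mem_span_singleton.1 hu
    obtain ⟨s, hs⟩ := Submodule.mem_span_singleton.1 hv
    set Pa : ℝ := ∏ j ∈ Finset.range k, a (n+j) with hPadef
    set Pd : ℝ := ∏ j ∈ Finset.range k, |d (n+j)| with hPddef
    have hCpos : (0:ℝ) < max X 1 := lt_of_lt_of_le zero_lt_one (le_max_right X 1)
    have habs : |t| = 1 := by
      rw [← ht, norm_smul, norm_e1, mul_one, Real.norm_eq_abs] at hu1
      exact hu1
    have hnormu : ‖(prodM M n k).mulVec u‖ = Pa := by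
      rw [← ht, Matrix.mulVec_smul, hprod_e1, norm_smul, norm_smul, norm_e1]
      simp only [Real.norm_eq_abs]
      rw [habs, abs_of_pos (hPa_pos n k)]
      ring
    have hsnorm : |s| * ‖(![x n, 1] : Fin 2 → ℝ)‖ = 1 := by
      rw [← hs, norm_smul, Real.norm_eq_abs] at hv1
      exact hv1
    have hwn_pos : (0:ℝ) < ‖(![x n, 1] : Fin 2 → ℝ)‖ :=
      lt_of_lt_of_le zero_lt_one (one_le_norm_vec _)
    have hsinv : |s| = ‖(![x n, 1] : Fin 2 → ℝ)‖⁻¹ := eq_inv_of_mul_eq_one_left hsnorm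
    have hsge : (max X 1)⁻¹ ≤ |s| := by
      rw [hsinv]
      exact inv_anti₀ hwn_pos (norm_vec_le (x n) X (hX n))
    have hnormv : ‖(prodM M n k).mulVec v‖
        = |s| * (|∏ j ∈ Finset.range k, d (n+j)| * ‖(![x (n+k), 1] : Fin 2 → ℝ)‖) := by
      rw [← hs, Matrix.mulVec_smul, hprod_w x hxrec, norm_smul, norm_smul]
      simp only [Real.norm_eq_abs]
    have habsPd : |∏ j ∈ Finset.range k, d (n+j)| = Pd := Finset.abs_prod _ _
    have hlow : (max X 1)⁻¹ * Pd ≤ ‖(prodM M n k).mulVec v‖ := by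
      rw [hnormv, habsPd]
      have h1 : (max X 1)⁻¹ * Pd ≤ |s| * Pd :=
        mul_le_mul_of_nonneg_right hsge (le_of_lt (hPd_pos n k))
      have h2 : |s| * Pd ≤ |s| * (Pd * ‖(![x (n+k), 1] : Fin 2 → ℝ)‖) := by
        rw [← mul_one (|s| * Pd), mul_assoc]
        apply mul_le_mul_of_nonneg_left _ (abs_nonneg s)
        apply mul_le_mul_of_nonneg_left (one_le_norm_vec _) (le_of_lt (hPd_pos n k))
      linarith
    rw [hnormu, hzpow]
    calc Pa ≤ η⁻¹ ^ k * Pd := hPaPd n k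
      _ = max X 1 * η⁻¹ ^ k * ((max X 1)⁻¹ * Pd) := by
          have heq2 : max X 1 * η⁻¹ ^ k * ((max X 1)⁻¹ * Pd)
              = (max X 1 * (max X 1)⁻¹) * (η⁻¹ ^ k * Pd) := by ring
          rw [heq2, mul_inv_cancel₀ (ne_of_gt hCpos), one_mul]
      _ ≤ max X 1 * η⁻¹ ^ k * ‖(prodM M n k).mulVec v‖ := by
          apply mul_le_mul_of_nonneg_left hlow
          positivity
  · -- uniqueness
    rintro F' ⟨hdim', hne', hinv', C', hC'0, hineq'⟩
    funext n
    -- find the slope sequence y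
    have hslope : ∀ m : ℤ, ∃ y : ℝ, F' m = Submodule.span ℝ {![y, 1]} := by
      intro m
      obtain ⟨v, hv0, hvspan⟩ := line_exists_spanning (F' m) (hdim' m)
      have hv1 : v 1 ≠ 0 := by
        intro h1
        have hv00 : v 0 ≠ 0 := by
          intro h0
          apply hv0
          funext i; fin_cases i <;> simp [h0, h1]
        have hveq : v = (v 0) • ![1, 0] := by
          funext i; fin_cases i <;> simp [h1]
        apply hne' m
        rw [hvspan]
        conv_lhs => rw [hveq]
        exact Submodule.span_singleton_smul_eq (IsUnit.mk0 (v 0) hv00) _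
      refine ⟨v 0 / v 1, ?_⟩
      have hveq : v = (v 1) • ![v 0 / v 1, 1] := by
        funext i; fin_cases i
        · simp
          field_simp
        · simp
      rw [hvspan]
      conv_lhs => rw [hveq]
      exact Submodule.span_singleton_smul_eq (IsUnit.mk0 (v 1) hv1) _
    choose y hy using hslope
    -- recursion for y
    have hyrec : ∀ m, d m * y (m+1) = a m * y m + b m := by
      intro m
      have h := hinv' m
      rw [hy m, hy (m+1), Submodule.map_span, Set.image_singleton, Matrix.toLin'_apply,
        hmulvec] at h
      have hmem : (![a m * y m + b m * 1, d m * 1] : Fin 2 → ℝ)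
          ∈ Submodule.span ℝ {(![y (m+1), 1] : Fin 2 → ℝ)} :=
        h ▸ Submodule.mem_span_singleton_self _
      obtain ⟨e, he⟩ := Submodule.mem_span_singleton.1 hmem
      have h1 := congrFun he 1
      have h0 := congrFun he 0
      simp at h1 h0
      rw [h1] at h0
      linarith
    -- it suffices to show y n = x n
    suffices hxy : y n = x n by
      rw [hy n, hxy, hFdef]
    -- the difference sequence
    have hδrec : ∀ m, |d m| * |y (m+1) - x (m+1)| = a m * |y m - x m| := by
      intro m
      have h : d m * (y (m+1) - x (m+1)) = a m * (y m - x m) := by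
        linear_combination hyrec m - hxrec m
      calc |d m| * |y (m+1) - x (m+1)| = |d m * (y (m+1) - x (m+1))| := (abs_mul _ _).symm
        _ = |a m * (y m - x m)| := by rw [h]
        _ = a m * |y m - x m| := by rw [abs_mul, abs_of_pos (ha m)]
    -- backward expansion of the difference
    have hδprod : ∀ (m : ℤ) (k : ℕ),
        |y m - x m| = |y (m+k) - x (m+k)| * ∏ j ∈ Finset.range k, (|d (m+j)| / a (m+j)) := by
      intro m k
      induction k with
      | zero => simp
      | succ k ih =>
        rw [ih, Finset.prod_range_succ]
        have hcast : (m : ℤ) + (k:ℕ) + 1 = m + ((k:ℕ)+1 : ℕ) := by push_cast; ring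
        have h := hδrec (m + k)
        have hak := ha (m+k)
        have hdk := hd0 (m+k)
        have heq : |y (m + (k:ℕ)) - x (m + (k:ℕ))|
            = |y (m + ((k:ℕ)+1:ℕ)) - x (m + ((k:ℕ)+1:ℕ))| * (|d (m+(k:ℕ))| / a (m+(k:ℕ))) := by
          rw [← hcast]
          have hane : a (m+(k:ℕ)) ≠ 0 := ne_of_gt hak
          field_simp
          linarith [h]
        rw [heq]
        ring
    have hQ_ge : ∀ (m : ℤ) (k : ℕ), η ^ k ≤ ∏ j ∈ Finset.range k, (|d (m+j)| / a (m+j)) := by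
      intro m k
      calc (η:ℝ) ^ k = ∏ _j ∈ Finset.range k, η := by simp
        _ ≤ ∏ j ∈ Finset.range k, (|d (m+j)| / a (m+j)) := by
            refine Finset.prod_le_prod (fun j _ => le_of_lt hη0) (fun j _ => ?_)
            rw [le_div_iff₀ (ha (m+j))]
            nlinarith [hdom (m+j)]
    -- key estimate
    set N : ℝ := ‖(![y n, 1] : Fin 2 → ℝ)‖ with hNdef
    have hN1 : 1 ≤ N := one_le_norm_vec _
    set K : ℝ := C' * N + X with hKdef
    have hK0 : 0 ≤ K := by nlinarith [hC'0]
    have hkey : ∀ k : ℕ, 1 ≤ k → |y n - x n| ≤ K * (η ^ k)⁻¹ := by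
      intro k hk
      set m : ℤ := n - k with hmdef
      have hmk : m + (k:ℕ) = n := by rw [hmdef]; ring
      have hwm_pos : (0:ℝ) < ‖(![y m, 1] : Fin 2 → ℝ)‖ :=
        lt_of_lt_of_le zero_lt_one (one_le_norm_vec _)
      have hvmem : ‖(![y m, 1] : Fin 2 → ℝ)‖⁻¹ • (![y m, 1] : Fin 2 → ℝ) ∈ F' m := by
        rw [hy m]
        exact Submodule.smul_mem _ _ (Submodule.mem_span_singleton_self _)
      have hv1 : ‖(‖(![y m, 1] : Fin 2 → ℝ)‖⁻¹ • (![y m, 1] : Fin 2 → ℝ))‖ = 1 := by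
        rw [norm_smul, Real.norm_eq_abs, abs_of_pos (by positivity)]
        field_simp
      have humem : (![1,0] : Fin 2 → ℝ) ∈ Submodule.span ℝ ({![1, 0]} : Set (Fin 2 → ℝ)) :=
        Submodule.mem_span_singleton_self _
      have hineq := hineq' m k hk ![1,0] _ humem norm_e1 hvmem hv1
      set Pa : ℝ := ∏ j ∈ Finset.range k, a (m+j) with hPadef
      set Pd : ℝ := ∏ j ∈ Finset.range k, |d (m+j)| with hPddef
      set Q : ℝ := ∏ j ∈ Finset.range k, (|d (m+j)| / a (m+j)) with hQdef
      have hηk : (0:ℝ) < η ^ k := by positivity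
      have hQpos : 0 < Q := lt_of_lt_of_le hηk (hQ_ge m k)
      have hPdQ : Pd = Pa * Q := by
        rw [hPddef, hPadef, hQdef, ← Finset.prod_mul_distrib]
        refine Finset.prod_congr rfl (fun j _ => ?_)
        rw [mul_comm, div_mul_cancel₀ _ (ne_of_gt (ha (m+j)))]
      have hnormu : ‖(prodM M m k).mulVec ![1,0]‖ = Pa := by
        rw [hprod_e1, norm_smul, norm_e1, Real.norm_eq_abs, abs_of_pos (hPa_pos m k)]
        ring
      have hnormv : ‖(prodM M m k).mulVec (‖(![y m, 1] : Fin 2 → ℝ)‖⁻¹ • (![y m, 1] : Fin 2 → ℝ))‖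
          = ‖(![y m, 1] : Fin 2 → ℝ)‖⁻¹ * (Pd * N) := by
        rw [Matrix.mulVec_smul, hprod_w y hyrec m k, hmk, norm_smul, norm_smul]
        simp only [Real.norm_eq_abs]
        rw [abs_of_pos (by positivity : (0:ℝ) < ‖(![y m, 1] : Fin 2 → ℝ)‖⁻¹),
          Finset.abs_prod, hNdef]
      rw [hnormu, hnormv, hzpow] at hineq
      -- multiply through by ‖![y m, 1]‖
      have hineq2 : Pa * ‖(![y m, 1] : Fin 2 → ℝ)‖ ≤ C' * η⁻¹ ^ k * (Pd * N) := by
        have h2 := mul_le_mul_of_nonneg_right hineq (le_of_lt hwm_pos)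
        calc Pa * ‖(![y m, 1] : Fin 2 → ℝ)‖
            ≤ C' * η⁻¹ ^ k * (‖(![y m, 1] : Fin 2 → ℝ)‖⁻¹ * (Pd * N))
              * ‖(![y m, 1] : Fin 2 → ℝ)‖ := h2
          _ = C' * η⁻¹ ^ k * (Pd * N)
              * (‖(![y m, 1] : Fin 2 → ℝ)‖⁻¹ * ‖(![y m, 1] : Fin 2 → ℝ)‖) := by ring
          _ = C' * η⁻¹ ^ k * (Pd * N) := by
              rw [inv_mul_cancel₀ (ne_of_gt hwm_pos), mul_one]
      -- lower bound for ‖![y m, 1]‖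
      have hδm : |y m - x m| = |y n - x n| * Q := by
        have h3 := hδprod m k
        rw [hmk] at h3
        rw [h3, hQdef]
      have hwm_ge : |y n - x n| * Q - X ≤ ‖(![y m, 1] : Fin 2 → ℝ)‖ := by
        have h1 : |y m| ≤ ‖(![y m, 1] : Fin 2 → ℝ)‖ := abs_le_norm_vec _
        have h2 : |y m - x m| ≤ |y m| + |x m| := abs_sub _ _
        have h4 := hX m
        rw [← hδm]
        linarith
      -- combine
      have hPa_pos' := hPa_pos m k
      have hηinv : η⁻¹ ^ k = (η ^ k)⁻¹ := by rw [inv_pow]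
      have hstep1 : Pa * (|y n - x n| * Q - X) ≤ Pa * (C' * (η ^ k)⁻¹ * (Q * N)) := by
        calc Pa * (|y n - x n| * Q - X)
            ≤ Pa * ‖(![y m, 1] : Fin 2 → ℝ)‖ := mul_le_mul_of_nonneg_left hwm_ge (le_of_lt hPa_pos')
          _ ≤ C' * η⁻¹ ^ k * (Pd * N) := hineq2
          _ = Pa * (C' * (η ^ k)⁻¹ * (Q * N)) := by rw [hPdQ, hηinv]; ring
      have hstep2 : |y n - x n| * Q - X ≤ C' * (η ^ k)⁻¹ * (Q * N) :=
        le_of_mul_le_mul_left hstep1 hPa_pos'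
      have hQηk : η ^ k ≤ Q := hQ_ge m k
      have hXQQ : X / Q * Q = X := div_mul_cancel₀ X (ne_of_gt hQpos)
      have hδn : |y n - x n| ≤ C' * (η ^ k)⁻¹ * N + X / Q := by
        nlinarith [hstep2, hXQQ, hQpos]
      have hXQ : X / Q ≤ X / η ^ k :=
        div_le_div_of_nonneg_left hX0 hηk hQηk
      have hfin : C' * (η ^ k)⁻¹ * N + X / η ^ k = K * (η ^ k)⁻¹ := by
        rw [hKdef, div_eq_mul_inv]
        ring
      rw [← hfin]
      linarith [hδn, hXQ]
    -- conclude
    by_contra hδne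
    have hδne' : y n - x n ≠ 0 := fun h => hδne (by linarith [sub_eq_zero.1 h])
    have hδpos : 0 < |y n - x n| := abs_pos.2 hδne'
    obtain ⟨k, hkgt⟩ := pow_unbounded_of_one_lt (K / |y n - x n|) hη
    have hk1 : K / |y n - x n| < η ^ (k+1) :=
      lt_of_lt_of_le hkgt (pow_le_pow_right₀ (le_of_lt hη) (Nat.le_succ k))
    have h := hkey (k+1) (Nat.le_add_left 1 k)
    have hηk1 : (0:ℝ) < η ^ (k+1) := by positivity
    have hlt : K * (η ^ (k+1))⁻¹ < |y n - x n| := by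
      rw [← div_eq_mul_inv, div_lt_iff₀ hηk1]
      rw [div_lt_iff₀ hδpos] at hk1
      linarith
    linarith
end
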